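/- Optimality of the counting test among diagonal tests (key inequality of Theorem 5.1): let N > 0, R₀ ≥ 0, α ∈ (0,1), and define P_{r}(k) = (1/(N+1))(N/(N+1))^k e^{−r²/(N+1)} L_k(−r²/(N(N+1))). Let k₀ ∈ ℕ and γ ∈ (0,1] be chosen so that γ P_{R₀}(k₀) + Σ_{k>k₀} P_{R₀}(k) = α. Then for any sequence (t_k) with t_k ∈ [0,1] and Σ_k t_k P_{R₀}(k) ≤ α, and any r > R₀, we have Σ_k t_k P_r(k) ≤ γ P_r(k₀) + Σ_{k>k₀} P_r(k). -/

import Mathlib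

/-!
The proof is the Neyman–Pearson argument. Writing `p = Pr N R₀` and `q = Pr N r`, the ratio
`q k / p k` increases with `k`: up to a constant it is `L_k(-x) / L_k(-y)` with `x ≥ y ≥ 0`, and
`L_k(-x) = ∑ C(k, j) x ^ j / j!` has coefficients whose ratio to those of `L_{k+1}(-x)` decreases
in `j`, so the Chebyshev-type inequality for such polynomials gives the step `k → k + 1`. Hence the
threshold test `φ` satisfies `(φ k - t k) (p k₀ q k - q k₀ p k) ≥ 0` for every `k`; summing over `k`
and using that `φ` exhausts the level gives `∑ t q ≤ ∑ φ q`.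
-/

noncomputable def laguerre (k : ℕ) (x : ℝ) : ℝ :=
  ∑ j ∈ Finset.range (k + 1), (k.choose j : ℝ) * (-x) ^ j / (j.factorial : ℝ)

/-- Number-measurement outcome distribution on the quantum Gaussian state with
|mean| = r and number parameter N. -/
noncomputable def Pr (N r : ℝ) (k : ℕ) : ℝ :=
  (1 / (N + 1)) * (N / (N + 1)) ^ k * Real.exp (-r ^ 2 / (N + 1)) *
    laguerre k (-r ^ 2 / (N * (N + 1)))

open Finset

section Chebyshev

variable {R : Type*} [CommRing R] [LinearOrder R] [IsStrictOrderedRing R]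

theorem pow_mul_pow_le_pow_mul_pow {x y : R} (hy : 0 ≤ y) (hxy : y ≤ x) {i j : ℕ} (h : j ≤ i) :
    x ^ j * y ^ i ≤ x ^ i * y ^ j := by
  obtain ⟨d, rfl⟩ := Nat.exists_eq_add_of_le h
  have hx : 0 ≤ x := hy.trans hxy
  calc x ^ j * y ^ (j + d) = x ^ j * y ^ j * y ^ d := by ring
    _ ≤ x ^ j * y ^ j * x ^ d :=
      mul_le_mul_of_nonneg_left (pow_le_pow_left₀ hy hxy d)
        (mul_nonneg (pow_nonneg hx j) (pow_nonneg hy j))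
    _ = x ^ (j + d) * y ^ j := by ring

/-- If `a j / b j` increases with `j`, then `(∑ a j X ^ j) / (∑ b j X ^ j)` increases with
`X ≥ 0`. -/
theorem sum_mul_pow_mul_sum_mul_pow_le (s : Finset ℕ) {a b : ℕ → R}
    (hab : ∀ i j, j ≤ i → a j * b i ≤ a i * b j) {x y : R} (hy : 0 ≤ y) (hxy : y ≤ x) :
    (∑ j ∈ s, b j * x ^ j) * (∑ j ∈ s, a j * y ^ j) ≤
      (∑ j ∈ s, a j * x ^ j) * (∑ j ∈ s, b j * y ^ j) := by
  have hterm : ∀ i j, 0 ≤ (a i * b j - a j * b i) * (x ^ i * y ^ j - x ^ j * y ^ i) := by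
    intro i j
    rcases le_total j i with h | h
    · exact mul_nonneg (sub_nonneg.2 (hab i j h))
        (sub_nonneg.2 (pow_mul_pow_le_pow_mul_pow hy hxy h))
    · exact mul_nonneg_of_nonpos_of_nonpos (sub_nonpos.2 (hab j i h))
        (sub_nonpos.2 (pow_mul_pow_le_pow_mul_pow hy hxy h))
  -- symmetrising the double sum of the nonnegative terms gives twice the difference of both sides
  have hdouble : ∑ i ∈ s, ∑ j ∈ s, (a i * b j - a j * b i) * (x ^ i * y ^ j - x ^ j * y ^ i) =
      2 * ((∑ j ∈ s, a j * x ^ j) * (∑ j ∈ s, b j * y ^ j) -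
        (∑ j ∈ s, b j * x ^ j) * (∑ j ∈ s, a j * y ^ j)) := by
    have hexpand : ∀ i j, (a i * b j - a j * b i) * (x ^ i * y ^ j - x ^ j * y ^ i) =
        a i * x ^ i * (b j * y ^ j) - a i * y ^ i * (b j * x ^ j)
          - (b i * x ^ i * (a j * y ^ j) - b i * y ^ i * (a j * x ^ j)) := fun i j ↦ by ring
    simp only [hexpand, sum_sub_distrib, ← mul_sum, ← sum_mul]
    ring
  have := sum_nonneg fun i (_ : i ∈ s) ↦ sum_nonneg fun j (_ : j ∈ s) ↦ hterm i j
  rw [hdouble] at this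
  linarith

end Chebyshev

theorem laguerre_neg_eq_sum (k : ℕ) (x : ℝ) {n : ℕ} (hn : k + 1 ≤ n) :
    laguerre k (-x) = ∑ j ∈ range n, (k.choose j / j.factorial : ℝ) * x ^ j := by
  rw [laguerre, sum_subset (range_subset_range.2 hn)]
  · refine sum_congr rfl fun j _ ↦ ?_
    rw [neg_neg]
    ring
  · intro j _ hj
    rw [Nat.choose_eq_zero_of_lt (by simpa using hj)]
    simp

theorem laguerre_neg_pos {x : ℝ} (hx : 0 ≤ x) (k : ℕ) : 0 < laguerre k (-x) := by
  rw [laguerre_neg_eq_sum k x le_rfl]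
  exact sum_pos' (fun j _ ↦ by positivity) ⟨0, by simp⟩

theorem Nat.succ_choose_mul_choose_le {k i j : ℕ} (h : j ≤ i) :
    (k + 1).choose j * k.choose i ≤ (k + 1).choose i * k.choose j := by
  refine Nat.le_of_mul_le_mul_right ?_ k.succ_pos
  calc (k + 1).choose j * k.choose i * (k + 1)
      = (k + 1).choose j * (k + 1).choose i * (k + 1 - i) := by
        rw [mul_assoc, Nat.choose_mul_succ_eq, mul_assoc]
    _ ≤ (k + 1).choose j * (k + 1).choose i * (k + 1 - j) := by gcongr
    _ = (k + 1).choose i * k.choose j * (k + 1) := by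
        rw [mul_assoc ((k + 1).choose i), Nat.choose_mul_succ_eq k j]
        ring

theorem laguerre_neg_mul_laguerre_succ_neg_le {x y : ℝ} (hy : 0 ≤ y) (hxy : y ≤ x) (k : ℕ) :
    laguerre k (-x) * laguerre (k + 1) (-y) ≤ laguerre (k + 1) (-x) * laguerre k (-y) := by
  simp only [laguerre_neg_eq_sum k _ (Nat.le_succ (k + 1)), laguerre_neg_eq_sum (k + 1) _ le_rfl]
  refine sum_mul_pow_mul_sum_mul_pow_le _ (fun i j hji ↦ ?_) hy hxy
  rw [div_mul_div_comm, div_mul_div_comm, mul_comm (j.factorial : ℝ)]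
  exact div_le_div_of_nonneg_right (by exact_mod_cast Nat.succ_choose_mul_choose_le hji)
    (by positivity)

theorem monotone_laguerre_neg_div {x y : ℝ} (hy : 0 ≤ y) (hxy : y ≤ x) :
    Monotone fun k ↦ laguerre k (-x) / laguerre k (-y) := by
  refine monotone_nat_of_le_succ fun k ↦ ?_
  rw [div_le_div_iff₀ (laguerre_neg_pos hy k) (laguerre_neg_pos hy (k + 1))]
  exact laguerre_neg_mul_laguerre_succ_neg_le hy hxy k

theorem laguerre_neg_le_exp {x ε : ℝ} (hx : 0 ≤ x) (hε : 0 < ε) (k : ℕ) :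
    laguerre k (-x) ≤ Real.exp (x / ε) * Real.exp ε ^ k := by
  set u : ℕ → ℝ := fun j ↦ (k * ε) ^ j / j.factorial
  set v : ℕ → ℝ := fun j ↦ (x / ε) ^ j / j.factorial
  have hv : ∀ j ∈ range (k + 1), v j ≤ ∑ i ∈ range (k + 1), v i :=
    fun j hj ↦ single_le_sum (fun i _ ↦ by positivity) hj
  rw [laguerre_neg_eq_sum k x le_rfl, ← Real.exp_nat_mul, mul_comm]
  calc ∑ j ∈ range (k + 1), (k.choose j / j.factorial : ℝ) * x ^ j
      ≤ ∑ j ∈ range (k + 1), u j * v j := by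
        refine sum_le_sum fun j _ ↦ ?_
        calc (k.choose j / j.factorial : ℝ) * x ^ j
            ≤ (k ^ j / j.factorial / j.factorial : ℝ) * x ^ j := by
              gcongr
              exact Nat.choose_le_pow_div j k
          _ = u j * v j := by
              simp only [u, v]
              rw [mul_pow, div_pow]
              field_simp
    _ ≤ ∑ j ∈ range (k + 1), u j * ∑ i ∈ range (k + 1), v i :=
        sum_le_sum fun j hj ↦ mul_le_mul_of_nonneg_left (hv j hj) (by positivity)
    _ ≤ Real.exp (k * ε) * Real.exp (x / ε) := by
        rw [← sum_mul]
        exact mul_le_mul (Real.sum_le_exp_of_nonneg (by positivity) _)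
          (Real.sum_le_exp_of_nonneg (by positivity) _) (by positivity) (by positivity)

theorem Pr_pos {N : ℝ} (hN : 0 < N) (r : ℝ) (k : ℕ) : 0 < Pr N r k := by
  have := laguerre_neg_pos (x := r ^ 2 / (N * (N + 1))) (by positivity) k
  rw [Pr, neg_div (N * (N + 1))]
  exact mul_pos (by positivity) this

theorem summable_Pr {N : ℝ} (hN : 0 < N) (r : ℝ) : Summable (Pr N r) := by
  set ε := Real.log ((2 * N + 1) / (2 * N))
  have hε : 0 < ε := Real.log_pos (by rw [one_lt_div (by positivity)]; linarith)
  have hexp : N / (N + 1) * Real.exp ε = (2 * N + 1) / (2 * N + 2) := by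
    rw [Real.exp_log (by positivity)]
    field_simp
  have hq : N / (N + 1) * Real.exp ε < 1 := by
    rw [hexp, div_lt_one (by positivity)]
    linarith
  refine Summable.of_nonneg_of_le (fun k ↦ (Pr_pos hN r k).le) (fun k ↦ ?_)
    ((summable_geometric_of_lt_one (by positivity) hq).mul_left
      (1 / (N + 1) * Real.exp (-r ^ 2 / (N + 1)) * Real.exp (r ^ 2 / (N * (N + 1)) / ε)))
  have := laguerre_neg_le_exp (x := r ^ 2 / (N * (N + 1))) (by positivity) hε k
  rw [Pr, neg_div (N * (N + 1)), mul_pow]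
  calc _ ≤ 1 / (N + 1) * (N / (N + 1)) ^ k * Real.exp (-r ^ 2 / (N + 1)) *
        (Real.exp (r ^ 2 / (N * (N + 1)) / ε) * Real.exp ε ^ k) :=
        mul_le_mul_of_nonneg_left this (by positivity)
    _ = _ := by ring

theorem monotone_Pr_div_Pr {N : ℝ} (hN : 0 < N) {r s : ℝ} (hs : 0 ≤ s) (hsr : s ≤ r) :
    Monotone fun k ↦ Pr N r k / Pr N s k := by
  have hmono := monotone_laguerre_neg_div (x := r ^ 2 / (N * (N + 1)))
    (y := s ^ 2 / (N * (N + 1))) (by positivity) (by gcongr)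
  have hratio : ∀ k, Pr N r k / Pr N s k =
      Real.exp (-r ^ 2 / (N + 1)) / Real.exp (-s ^ 2 / (N + 1)) *
        (laguerre k (-(r ^ 2 / (N * (N + 1)))) / laguerre k (-(s ^ 2 / (N * (N + 1))))) := by
    intro k
    have := laguerre_neg_pos (x := s ^ 2 / (N * (N + 1))) (by positivity) k
    rw [Pr, Pr, neg_div (N * (N + 1)), neg_div (N * (N + 1))]
    field_simp
  simp only [hratio]
  exact hmono.const_mul (by positivity)

section NeymanPearson

variable {ι : Type*} {p q φ t : ι → ℝ}

theorem tsum_mul_le_tsum_mul_of_sign {a b : ℝ} (ha : 0 < a) (hb : 0 ≤ b)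
    (htp : Summable fun i ↦ t i * p i) (hφp : Summable fun i ↦ φ i * p i)
    (htq : Summable fun i ↦ t i * q i) (hφq : Summable fun i ↦ φ i * q i)
    (hlevel : ∑' i, t i * p i ≤ ∑' i, φ i * p i)
    (hsign : ∀ i, 0 ≤ (φ i - t i) * (a * q i - b * p i)) :
    ∑' i, t i * q i ≤ ∑' i, φ i * q i := by
  have hsum := ((hφq.hasSum.sub htq.hasSum).mul_left a).sub
    ((hφp.hasSum.sub htp.hasSum).mul_left b)
  have hgain := hsum.nonneg fun i ↦ (hsign i).trans_eq (by ring)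
  nlinarith [mul_nonneg hb (sub_nonneg.2 hlevel)]

end NeymanPearson

def thresholdTest (k₀ : ℕ) (γ : ℝ) (k : ℕ) : ℝ :=
  if k = k₀ then γ else if k₀ < k then 1 else 0

theorem hasSum_thresholdTest_mul {f : ℕ → ℝ} (hf : Summable f) (k₀ : ℕ) (γ : ℝ) :
    HasSum (fun k ↦ thresholdTest k₀ γ k * f k)
      (γ * f k₀ + ∑' k, if k₀ < k then f k else 0) := by
  have htail : Summable fun k ↦ if k₀ < k then f k else 0 :=
    hf.summable_of_eq_zero_or_self fun k ↦ by split_ifs <;> simp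
  convert (hasSum_ite_eq k₀ (γ * f k₀)).add htail.hasSum using 1
  ext k
  rcases lt_trichotomy k k₀ with h | rfl | h
  · simp [thresholdTest, h.ne, h.not_gt]
  · simp [thresholdTest]
  · simp [thresholdTest, h.ne', h]

theorem thresholdTest_sign {p q t : ℕ → ℝ} (hp : ∀ k, 0 < p k)
    (hmono : Monotone fun k ↦ q k / p k) (ht : ∀ k, t k ∈ Set.Icc (0 : ℝ) 1) (k₀ : ℕ) (γ : ℝ)
    (k : ℕ) : 0 ≤ (thresholdTest k₀ γ k - t k) * (p k₀ * q k - q k₀ * p k) := by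
  rcases lt_trichotomy k k₀ with h | rfl | h
  · have hratio := hmono h.le
    rw [div_le_div_iff₀ (hp k) (hp k₀)] at hratio
    simp only [thresholdTest, h.ne, h.not_gt, if_false]
    nlinarith [(ht k).1]
  · rw [mul_comm (p k), sub_self, mul_zero]
  · have hratio := hmono h.le
    rw [div_le_div_iff₀ (hp k₀) (hp k)] at hratio
    simp only [thresholdTest, h.ne', h, if_true, if_false]
    nlinarith [(ht k).2]

theorem counting_test_optimal_general (N : ℝ) (hN : 0 < N) (R₀ : ℝ) (hR₀ : 0 ≤ R₀)
    (α : ℝ) (k₀ : ℕ) (γ : ℝ)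
    (hlevel : γ * Pr N R₀ k₀ + ∑' k : ℕ, (if k₀ < k then Pr N R₀ k else 0) = α)
    (t : ℕ → ℝ) (ht : ∀ k, t k ∈ Set.Icc (0:ℝ) 1)
    (htlevel : ∑' k : ℕ, t k * Pr N R₀ k ≤ α)
    (r : ℝ) (hr : R₀ < r) :
    ∑' k : ℕ, t k * Pr N r k ≤ γ * Pr N r k₀ + ∑' k : ℕ, (if k₀ < k then Pr N r k else 0) := by
  have hφp := hasSum_thresholdTest_mul (summable_Pr hN R₀) k₀ γ
  have hφq := hasSum_thresholdTest_mul (summable_Pr hN r) k₀ γ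
  have htest : ∀ s, Summable fun k ↦ t k * Pr N s k := fun s ↦
    (summable_Pr hN s).of_nonneg_of_le (fun k ↦ mul_nonneg (ht k).1 (Pr_pos hN s k).le)
      fun k ↦ mul_le_of_le_one_left (Pr_pos hN s k).le (ht k).2
  rw [← hφq.tsum_eq]
  refine tsum_mul_le_tsum_mul_of_sign (Pr_pos hN R₀ k₀) (Pr_pos hN r k₀).le (htest R₀)
    hφp.summable (htest r) hφq.summable ?_
    (thresholdTest_sign (Pr_pos hN R₀) (monotone_Pr_div_Pr hN hR₀ hr.le) ht k₀ γ)
  rw [hφp.tsum_eq, hlevel]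
  exact htlevel

/-- Key inequality of Theorem 5.1: the threshold-with-randomization counting test
maximizes power at every alternative `r > R₀` among all level-α randomized tests
based on the counts. -/
theorem counting_test_optimal (N : ℝ) (hN : 0 < N) (R₀ : ℝ) (hR₀ : 0 ≤ R₀)
    (α : ℝ) (hα : α ∈ Set.Ioo (0:ℝ) 1) (k₀ : ℕ) (γ : ℝ) (hγ : γ ∈ Set.Ioc (0:ℝ) 1)
    (hlevel : γ * Pr N R₀ k₀ + ∑' k : ℕ, (if k₀ < k then Pr N R₀ k else 0) = α)
    (t : ℕ → ℝ) (ht : ∀ k, t k ∈ Set.Icc (0:ℝ) 1)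
    (htlevel : ∑' k : ℕ, t k * Pr N R₀ k ≤ α)
    (r : ℝ) (hr : R₀ < r) :
    ∑' k : ℕ, t k * Pr N r k ≤ γ * Pr N r k₀ + ∑' k : ℕ, (if k₀ < k then Pr N r k else 0) :=
  counting_test_optimal_general N hN R₀ hR₀ α k₀ γ hlevel t ht htlevel r hr
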